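/- If u_1, ..., u_s ∈ V are pairwise orthogonal vectors with each h(u_i,u_i) a unit of R, then they can be extended to an orthogonal basis of V with all lengths units of R. -/

import Mathlib

open MulOpposite

/-- A `*`-hermitian form on a right `A`-module `V` (right modules are encoded as
modules over the opposite ring `Aᵐᵒᵖ`): it is additive and `A`-linear in the second
variable and satisfies `h v u = (h u v)*`. -/
structure HermitianForm (A V : Type*) [Ring A] [StarRing A] [AddCommGroup V]
    [Module Aᵐᵒᵖ V] where
  toFun : V → V → A
  add_right : ∀ u v w : V, toFun u (v + w) = toFun u v + toFun u w
  smul_right : ∀ (a : A) (u v : V), toFun u (op a • v) = toFun u v * a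
  conj_symm : ∀ u v : V, toFun v u = star (toFun u v)

namespace HermitianForm

variable {A V : Type*} [Ring A] [StarRing A] [AddCommGroup V] [Module Aᵐᵒᵖ V]

/-- Non-degeneracy: the map `u ↦ h u -` is a bijection of `V` onto the dual module. -/
def Nondeg (h : HermitianForm A V) : Prop :=
  ∀ φ : V →ₗ[Aᵐᵒᵖ] A, ∃! u : V, ∀ v : V, h.toFun u v = φ v

end HermitianForm

/-- A vector of the free module `V` of rank `m` is primitive if it belongs to a basis. -/
def IsPrimitive (A : Type*) {V : Type*} [Ring A] [AddCommGroup V] [Module Aᵐᵒᵖ V]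
    (m : ℕ) (v : V) : Prop :=
  ∃ (b : Module.Basis (Fin m) Aᵐᵒᵖ V) (i : Fin m), b i = v

/-!
A vector `u₀` of unit length splits `V` as `u₀A ⊕ u₀^⊥`, and `h` stays non-degenerate on `u₀^⊥`.
Over the local ring `A` the complement `u₀^⊥` is again free, of rank one less: like the span of
the basis vectors other than one whose coefficient in `u₀` is a unit, it is a complement of
`u₀A`, so both are isomorphic to `V ⧸ u₀A`. Induction on the rank then extends the remaining
vectors inside `u₀^⊥`. When no vector is given, non-degeneracy provides `x, y` with
`h(x, y) = 1`; if neither `x` nor `y` has unit length, then `x + yd` does, because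
`h(x + yd, x + yd) = h(x, x) + d* h(y, y) d + 1` and the non-units of `A` are closed under sums
(here `d + d* = 1` stands in for `2`, which need not be invertible).
-/

open Module Submodule LinearMap

section LocalRing

variable {R : Type*} [Ring R] [IsLocalRing R]

instance IsLocalRing.toIsDedekindFiniteMonoid : IsDedekindFiniteMonoid R where
  mul_eq_one_symm := fun {a b} hab => by
    have hidem : IsIdempotentElem (b * a) := by
      rw [IsIdempotentElem, mul_assoc, ← mul_assoc a, hab, one_mul]
    rcases IsLocalRing.isUnit_or_isUnit_of_add_one (add_sub_cancel (b * a) 1) with hu | hu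
    · exact (IsIdempotentElem.iff_eq_one_of_isUnit hu).mp hidem
    · have hb : (1 - b * a) * b = 0 := by rw [sub_mul, one_mul, mul_assoc, hab, mul_one, sub_self]
      rw [hu.mul_right_eq_zero.mp hb, mul_zero] at hab
      exact absurd hab zero_ne_one

instance MulOpposite.instIsLocalRing : IsLocalRing Rᵐᵒᵖ :=
  .of_isUnit_or_isUnit_of_isUnit_add fun _ _ hab =>
    (IsLocalRing.isUnit_or_isUnit_of_isUnit_add (isUnit_op.mp hab)).imp isUnit_op.mpr isUnit_op.mpr

theorem IsLocalRing.isUnit_add_one_of_not_isUnit {a : R} (ha : ¬IsUnit a) : IsUnit (a + 1) :=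
  (IsLocalRing.isUnit_or_isUnit_of_add_one (add_neg_cancel_comm a 1)).resolve_right
    (by rwa [IsUnit.neg_iff])

end LocalRing

section Module

variable {R M : Type*} [Ring R] [AddCommGroup M] [Module R M]

theorem LinearMap.isCompl_span_singleton_ker {φ : M →ₗ[R] R} {u : M} (hu : IsUnit (φ u)) :
    IsCompl (R ∙ u) (ker φ) := by
  obtain ⟨a, ha⟩ := hu
  constructor
  · rw [disjoint_def]
    rintro _ hx hker
    obtain ⟨c, rfl⟩ := mem_span_singleton.mp hx
    rw [mem_ker, map_smul, smul_eq_mul, ← ha, a.mul_left_eq_zero] at hker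
    rw [hker, zero_smul]
  · rw [codisjoint_iff, eq_top_iff']
    intro v
    have hv : v - (φ v * ↑a⁻¹) • u ∈ ker φ := by
      rw [mem_ker, map_sub, map_smul, smul_eq_mul, ← ha, mul_assoc, a.inv_mul, mul_one, sub_self]
    exact mem_sup.mpr ⟨_, mem_span_singleton.mpr ⟨_, rfl⟩, _, hv, add_sub_cancel _ _⟩

theorem Module.Basis.exists_coe_eq_cons_of_ker {n : ℕ} {φ : M →ₗ[R] R} {u : M}
    (hu : IsUnit (φ u)) (b : Basis (Fin n) R (ker φ)) :
    ∃ c : Basis (Fin (n + 1)) R M, ⇑c = Fin.cons u (Subtype.val ∘ b) := by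
  obtain ⟨a, ha⟩ := hu
  refine ⟨.mkFinCons u b (fun c x hx hcx => ?_) (fun z => ⟨-(φ z * ↑a⁻¹), ?_⟩), coe_mkFinCons ..⟩
  · have := congrArg φ hcx
    rwa [map_add, map_smul, mem_ker.mp hx, add_zero, smul_eq_mul, ← ha, map_zero,
      a.mul_left_eq_zero] at this
  · rw [mem_ker, map_add, map_smul, smul_eq_mul, ← ha, neg_mul, mul_assoc, a.inv_mul, mul_one,
      add_neg_cancel]

theorem Module.Basis.ker_coord_eq_span {n : ℕ} (b : Basis (Fin (n + 1)) R M) (j : Fin (n + 1)) :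
    ker (b.coord j) = span R (Set.range (b ∘ j.succAbove)) := by
  apply le_antisymm
  · intro x hx
    rw [← b.sum_repr x, Fin.sum_univ_succAbove _ j, show b.repr x j = 0 from hx, zero_smul,
      zero_add]
    exact sum_mem fun k _ => smul_mem _ _ (subset_span ⟨k, rfl⟩)
  · rw [span_le]
    rintro _ ⟨k, rfl⟩
    simp

theorem Module.Basis.exists_isUnit_repr [IsLocalRing R] {ι : Type*} [Fintype ι]
    (b : Basis ι R M) {φ : M →ₗ[R] R} {u : M} (hu : IsUnit (φ u)) : ∃ j, IsUnit (b.repr u j) := by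
  rw [← b.sum_repr u, map_sum] at hu
  simp only [map_smul, smul_eq_mul] at hu
  obtain ⟨j, -, hj⟩ := IsLocalRing.exists_of_isUnit_sum hu
  exact ⟨j, isUnit_of_mul_isUnit_left hj⟩

theorem LinearMap.nonempty_basis_ker [IsLocalRing R] {n : ℕ} (b : Basis (Fin (n + 1)) R M)
    {φ : M →ₗ[R] R} {u : M} (hu : IsUnit (φ u)) : Nonempty (Basis (Fin n) R (ker φ)) := by
  obtain ⟨j, hj⟩ := b.exists_isUnit_repr hu
  have hcoord : IsUnit (b.coord j u) := hj
  let e := (quotientEquivOfIsCompl _ _ (isCompl_span_singleton_ker hcoord)).symm.trans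
    (quotientEquivOfIsCompl _ _ (isCompl_span_singleton_ker hu))
  rw [b.ker_coord_eq_span j] at e
  exact ⟨(Basis.span (b.linearIndependent.comp _ Fin.succAbove_right_injective)).map e⟩

end Module

namespace HermitianForm

section Form

variable {A V : Type*} [Ring A] [StarRing A] [AddCommGroup V] [Module Aᵐᵒᵖ V]
  (h : HermitianForm A V)

def lin (u : V) : V →ₗ[Aᵐᵒᵖ] Aᵐᵒᵖ where
  toFun v := op (h.toFun u v)
  map_add' v w := by rw [h.add_right, op_add]
  map_smul' r v := by
    rw [RingHom.id_apply, smul_eq_mul, ← op_unop r, h.smul_right, op_mul, op_unop]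

@[simp]
theorem lin_apply (u v : V) : h.lin u v = op (h.toFun u v) := rfl

theorem mem_ker_lin {u v : V} : v ∈ ker (h.lin u) ↔ h.toFun u v = 0 := by
  rw [mem_ker, lin_apply, op_eq_zero_iff]

theorem zero_left (v : V) : h.toFun 0 v = 0 := by
  rw [h.conj_symm, star_eq_zero]
  exact op_injective ((h.lin v).map_zero)

theorem add_left (u v w : V) : h.toFun (u + v) w = h.toFun u w + h.toFun v w := by
  rw [h.conj_symm, h.add_right, star_add, ← h.conj_symm, ← h.conj_symm]

theorem smul_left (a : A) (u v : V) : h.toFun (op a • u) v = star a * h.toFun u v := by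
  rw [h.conj_symm, h.smul_right, star_mul, ← h.conj_symm]

def restrict (W : Submodule Aᵐᵒᵖ V) : HermitianForm A W where
  toFun x y := h.toFun x y
  add_right x y z := h.add_right x y z
  smul_right a x y := h.smul_right a x y
  conj_symm x y := h.conj_symm x y

def IsUnitOrthogonal {ι : Type*} (v : ι → V) : Prop :=
  (∀ i j, i ≠ j → h.toFun (v i) (v j) = 0) ∧ ∀ i, IsUnit (h.toFun (v i) (v i))

theorem isUnitOrthogonal_cons_iff {n : ℕ} (u : V) (v : Fin n → V) :
    h.IsUnitOrthogonal (Fin.cons u v : Fin (n + 1) → V) ↔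
      IsUnit (h.toFun u u) ∧ (∀ i, h.toFun u (v i) = 0) ∧ h.IsUnitOrthogonal v := by
  simp only [IsUnitOrthogonal, Fin.forall_fin_succ, Fin.cons_zero, Fin.cons_succ, ne_eq,
    not_true_eq_false, Fin.succ_ne_zero, (Fin.succ_ne_zero _).symm, Fin.succ_inj,
    not_false_eq_true, forall_const, IsEmpty.forall_iff, true_and, forall_and]
  constructor
  · rintro ⟨⟨-, hperp, horth⟩, hu, hunit⟩
    exact ⟨hu, hperp, horth, hunit⟩
  · rintro ⟨hu, hperp, horth, hunit⟩
    exact ⟨⟨fun i => by rw [h.conj_symm, hperp, star_zero], hperp, horth⟩, hu, hunit⟩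

theorem exists_isUnit_apply_self_of_apply_eq_one [IsLocalRing A] {d : A} (hd : d + star d = 1)
    {x y : V} (hxy : h.toFun x y = 1) : ∃ z, IsUnit (h.toFun z z) := by
  by_cases hx : IsUnit (h.toFun x x)
  · exact ⟨x, hx⟩
  by_cases hy : IsUnit (h.toFun y y)
  · exact ⟨y, hy⟩
  refine ⟨x + op d • y, ?_⟩
  have hyx : h.toFun y x = 1 := by rw [h.conj_symm, hxy, star_one]
  have hlen : h.toFun (x + op d • y) (x + op d • y)
      = h.toFun x x + star d * h.toFun y y * d + 1 := by
    rw [← hd]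
    simp only [h.add_right, h.add_left, h.smul_left, h.smul_right, hxy, hyx]
    noncomm_ring
  rw [hlen]
  refine IsLocalRing.isUnit_add_one_of_not_isUnit fun hu => ?_
  rcases IsLocalRing.isUnit_or_isUnit_of_isUnit_add hu with hu | hu
  · exact hx hu
  · exact hy (isUnit_of_mul_isUnit_right (isUnit_of_mul_isUnit_left hu))

variable {h}

theorem Nondeg.restrict_ker_lin (hnd : h.Nondeg) {u : V} (hu : IsUnit (h.toFun u u)) :
    (h.restrict (ker (h.lin u))).Nondeg := by
  set W := ker (h.lin u)
  have hWu : IsCompl W (Aᵐᵒᵖ ∙ u) := (isCompl_span_singleton_ker (isUnit_op.mpr hu)).symm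
  have hperp : ∀ y ∈ W, ∀ v ∈ Aᵐᵒᵖ ∙ u, h.toFun y v = 0 := by
    intro y hy v hv
    obtain ⟨c, rfl⟩ := mem_span_singleton.mp hv
    rw [← op_unop c, h.smul_right, h.conj_symm, h.mem_ker_lin.mp hy, star_zero, zero_mul]
  intro φ
  obtain ⟨z, hz, huniq⟩ := hnd (φ ∘ₗ W.projectionOnto _ hWu)
  have hzW : z ∈ W := by
    rw [h.mem_ker_lin, h.conj_symm, hz, comp_apply,
      projectionOnto_apply_right hWu ⟨u, mem_span_singleton_self u⟩, map_zero, star_zero]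
  refine ⟨⟨z, hzW⟩, fun y => ?_, fun y hy => Subtype.ext (huniq _ fun v => ?_)⟩
  · exact (hz y).trans (by rw [comp_apply, projectionOnto_apply_left])
  · rw [comp_apply, ← hy]
    conv_lhs => rw [← projection_add_projection_eq_self hWu v]
    rw [h.add_right, hperp y y.2 _ (projection_apply_mem hWu.symm v), add_zero]
    rfl

theorem Nondeg.exists_isUnit_apply_self [IsLocalRing A] (hnd : h.Nondeg) {d : A}
    (hd : d + star d = 1) {ι : Type*} (b : Basis ι Aᵐᵒᵖ V) (i : ι) :
    ∃ z, IsUnit (h.toFun z z) := by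
  obtain ⟨x, hx, -⟩ := hnd ((opLinearEquiv Aᵐᵒᵖ).symm.toLinearMap ∘ₗ b.coord i)
  refine h.exists_isUnit_apply_self_of_apply_eq_one hd (x := x) (y := b i) ?_
  rw [hx]
  simp

end Form

theorem exists_basis_isUnitOrthogonal_extending {A : Type*} [Ring A] [StarRing A]
    [IsLocalRing A] {d : A} (hd : d + star d = 1) {n : ℕ}
    {V : Type*} [AddCommGroup V] [Module Aᵐᵒᵖ V] (b : Basis (Fin n) Aᵐᵒᵖ V)
    {h : HermitianForm A V} (hnd : h.Nondeg) {s : ℕ} (u : Fin s → V)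
    (hu : h.IsUnitOrthogonal u) :
    ∃ (hs : s ≤ n) (w : Basis (Fin n) Aᵐᵒᵖ V),
      h.IsUnitOrthogonal w ∧ ∀ i, w (Fin.castLE hs i) = u i := by
  induction n generalizing V s with
  | zero =>
    cases s with
    | zero => exact ⟨le_rfl, b, ⟨finZeroElim, finZeroElim⟩, finZeroElim⟩
    | succ s =>
      have : Subsingleton V := b.repr.toEquiv.subsingleton
      simpa [Subsingleton.elim (u 0) 0, h.zero_left] using hu.2 0
  | succ n ih =>
    suffices hcons : ∀ {s} (u : Fin (s + 1) → V), h.IsUnitOrthogonal u →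
        ∃ (hs : s + 1 ≤ n + 1) (w : Basis (Fin (n + 1)) Aᵐᵒᵖ V),
          h.IsUnitOrthogonal w ∧ ∀ i, w (Fin.castLE hs i) = u i by
      cases s with
      | zero =>
        obtain ⟨z, hz⟩ := hnd.exists_isUnit_apply_self hd b 0
        obtain ⟨-, w, hw, -⟩ := hcons (Fin.cons z finZeroElim)
          ((isUnitOrthogonal_cons_iff h z _).mpr ⟨hz, finZeroElim, finZeroElim, finZeroElim⟩)
        exact ⟨Nat.zero_le _, w, hw, finZeroElim⟩
      | succ s => exact hcons u hu
    intro s u hu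
    rw [← Fin.cons_self_tail u, isUnitOrthogonal_cons_iff] at hu
    obtain ⟨hu₀, hperp, htail⟩ := hu
    have hu₀' : IsUnit (h.lin (u 0) (u 0)) := isUnit_op.mpr hu₀
    obtain ⟨bW⟩ := (h.lin (u 0)).nonempty_basis_ker b hu₀'
    obtain ⟨hs, w', hw', hw'u⟩ := ih bW (hnd.restrict_ker_lin hu₀)
      (fun i => ⟨Fin.tail u i, h.mem_ker_lin.mpr (hperp i)⟩) htail
    obtain ⟨w, hw⟩ := Basis.exists_coe_eq_cons_of_ker hu₀' w'
    refine ⟨Nat.succ_le_succ hs, w, ?_, Fin.cases ?_ fun i => ?_⟩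
    · rw [hw, isUnitOrthogonal_cons_iff]
      exact ⟨hu₀, fun i => h.mem_ker_lin.mp (w' i).2, hw'⟩
    · rw [hw]; rfl
    · rw [hw]
      exact congrArg Subtype.val (hw'u i)

end HermitianForm

theorem stmt_2_general {A V : Type*} [Ring A] [StarRing A] [IsLocalRing A]
    [AddCommGroup V] [Module Aᵐᵒᵖ V]
    (d : A) (hd : d + star d = 1)
    (m : ℕ) (b : Module.Basis (Fin m) Aᵐᵒᵖ V)
    (h : HermitianForm A V) (hnd : h.Nondeg)
    (s : ℕ) (u : Fin s → V)
    (horth : ∀ i j : Fin s, i ≠ j → h.toFun (u i) (u j) = 0)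
    (hunit : ∀ i : Fin s, IsUnit (h.toFun (u i) (u i))) :
    ∃ (hs : s ≤ m) (w : Module.Basis (Fin m) Aᵐᵒᵖ V),
      (∀ i j : Fin m, i ≠ j → h.toFun (w i) (w j) = 0) ∧
      (∀ i : Fin m, IsUnit (h.toFun (w i) (w i))) ∧
      (∀ i : Fin s, w (Fin.castLE hs i) = u i) := by
  obtain ⟨hs, w, ⟨hworth, hwunit⟩, hwu⟩ :=
    HermitianForm.exists_basis_isUnitOrthogonal_extending hd b hnd u ⟨horth, hunit⟩
  exact ⟨hs, w, hworth, hwunit, hwu⟩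

/-- Lemma 2.3(a): pairwise orthogonal vectors with unit lengths extend to an
orthogonal basis of `V` all of whose lengths are units. -/
theorem stmt_2 {A V : Type*} [Ring A] [StarRing A] [IsLocalRing A]
    [AddCommGroup V] [Module Aᵐᵒᵖ V]
    (hcent : ∀ a : A, star a = a → a ∈ Set.center A)
    (d : A) (hd : d + star d = 1)
    (m : ℕ) (hm : 1 ≤ m) (b : Module.Basis (Fin m) Aᵐᵒᵖ V)
    (h : HermitianForm A V) (hnd : h.Nondeg)
    (s : ℕ) (u : Fin s → V)
    (horth : ∀ i j : Fin s, i ≠ j → h.toFun (u i) (u j) = 0)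
    (hunit : ∀ i : Fin s, IsUnit (h.toFun (u i) (u i))) :
    ∃ (hs : s ≤ m) (w : Module.Basis (Fin m) Aᵐᵒᵖ V),
      (∀ i j : Fin m, i ≠ j → h.toFun (w i) (w j) = 0) ∧
      (∀ i : Fin m, IsUnit (h.toFun (w i) (w i))) ∧
      (∀ i : Fin s, w (Fin.castLE hs i) = u i) :=
  stmt_2_general d hd m b h hnd s u horth hunit
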